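/- Let k be an algebraically closed field, s ≥ 1, f_1,…,f_s, g ∈ k[X_0,X_1,…,X_s], and p ∈ k. Let Z := {ξ ∈ k^s : f_i(p,ξ)=0 for 1 ≤ i ≤ s}, and assume: Z is finite and nonempty; for every ξ ∈ Z one has g(p,ξ) ≠ 0 and det((∂f_i/∂X_j)(p,ξ))_{1≤i,j≤s} ≠ 0 (derivatives with respect to X_1,…,X_s); and the first coordinates ξ_1 of the points ξ ∈ Z are pairwise distinct. Let M ∈ k[X_0][T] be monic in T with deg_T M = #Z, and suppose M(X_0, X_1) lies in the ideal generated by f_1,…,f_s in the localization k[X_0,…,X_s]_g. For each ξ ∈ Z let R^ξ = (R^ξ_1,…,R^ξ_s) ∈ k⟦t⟧^s be the unique tuple of power series with f_i(p+t, R^ξ) = 0 for all i and constant terms equal to ξ. Then the following factorization holds in k⟦t⟧[T]: M(p+t, T) = ∏_{ξ ∈ Z} (T − R^ξ_1). -/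

import Mathlib

/-!
Substituting `(p + t, R^ξ)` into `k[X₀,…,X_s]` is a ring homomorphism to `k⟦t⟧` that kills
every `f_i` and sends `g` to a unit, since the constant term of `g(p + t, R^ξ)` is
`g(p, ξ) ≠ 0`. It therefore factors through the localization at `g` and kills `M(X₀, X₁)`,
i.e. `R^ξ_1` is a root of `M(p + t, T)`. These `#Z` roots are pairwise distinct, because their
constant terms `ξ_1` are, and a monic polynomial of degree `#Z` over the domain `k⟦t⟧` with
`#Z` distinct roots is the product of the corresponding linear factors.
-/

noncomputable section

open MvPolynomial

variable {k : Type*}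

/-- Substitution `X₀ ↦ p + t`, `X_m ↦ R m` of a polynomial `f ∈ k[X₀, X₁, …, X_s]` into the
power series ring `k⟦t⟧`. -/
def psSubst [Field k] {s : ℕ} (p : k) (R : Fin s → PowerSeries k)
    (f : MvPolynomial (Fin (s + 1)) k) : PowerSeries k :=
  aeval (fun v : Fin (s + 1) =>
    Fin.cases (PowerSeries.C p + PowerSeries.X) R v) f

/-- The zero set `Z := {ξ ∈ k^s : f_i(p, ξ) = 0 for all i}`. -/
def zerFib [Field k] {s : ℕ} (f : Fin s → MvPolynomial (Fin (s + 1)) k) (p : k) :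
    Set (Fin s → k) :=
  {ξ | ∀ i : Fin s, eval (fun v : Fin (s + 1) => Fin.cases p ξ v) (f i) = 0}

/-- The image of a bivariate polynomial `M ∈ k[X₀][T]` in `k[X₀, …, X_s]`, substituting
`X₀` for the coefficient variable and `X₁` for `T`. -/
def biToMv [Field k] {s : ℕ} (M : Polynomial (Polynomial k)) :
    MvPolynomial (Fin (s + 1)) k :=
  Polynomial.eval₂
    ((Polynomial.aeval (MvPolynomial.X (0 : Fin (s + 1)) :
      MvPolynomial (Fin (s + 1)) k)).toRingHom)
    (MvPolynomial.X (1 : Fin (s + 1))) M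

theorem Polynomial.Monic.eq_prod_X_sub_C_of_injOn {A ι : Type*} [CommRing A] [IsDomain A]
    {P : Polynomial A} (hP : P.Monic) (S : Finset ι) (r : ι → A) (hr : Set.InjOn r S)
    (hroot : ∀ i ∈ S, P.IsRoot (r i)) (hdeg : P.natDegree = S.card) :
    P = ∏ i ∈ S, (Polynomial.X - Polynomial.C (r i)) := by
  have hle : S.val.map r ≤ P.roots := by
    rw [Multiset.le_iff_subset (Multiset.Nodup.map_on hr S.nodup)]
    rintro _ hx
    obtain ⟨i, hi, rfl⟩ := Multiset.mem_map.mp hx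
    exact (Polynomial.mem_roots hP.ne_zero).mpr (hroot i hi)
  have hroots : S.val.map r = P.roots :=
    Multiset.eq_of_le_of_card_le hle (by simpa [hdeg] using P.card_roots')
  have hcard : P.roots.card = P.natDegree := by rw [← hroots, hdeg]; simp
  rw [← Polynomial.prod_multiset_X_sub_C_of_monic_of_roots_card_eq hP hcard, ← hroots,
    Multiset.map_map]
  rfl

theorem eq_zero_of_algebraMap_mem_span {A B : Type*} [CommRing A] [CommRing B] {ι : Type*}
    (g : A) (L : Type*) [CommRing L] [Algebra A L] [IsLocalization.Away g L]
    (φ : A →+* B) (hg : IsUnit (φ g)) (f : ι → A) (hf : ∀ i, φ (f i) = 0) {x : A}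
    (hx : algebraMap A L x ∈ Ideal.span (Set.range fun i => algebraMap A L (f i))) :
    φ x = 0 := by
  set ψ : L →+* B := IsLocalization.Away.lift g hg
  have hψ : ∀ a, ψ (algebraMap A L a) = φ a := IsLocalization.Away.lift_eq g hg
  have hker : Ideal.span (Set.range fun i => algebraMap A L (f i)) ≤ RingHom.ker ψ := by
    rw [Ideal.span_le]
    rintro _ ⟨i, rfl⟩
    simp [hψ, hf]
  simpa [hψ] using hker hx

lemma constantCoeff_psSubst [Field k] {s : ℕ} (p : k) (R : Fin s → PowerSeries k)
    (ξ : Fin s → k) (hc : ∀ m, PowerSeries.constantCoeff (R m) = ξ m)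
    (f : MvPolynomial (Fin (s + 1)) k) :
    PowerSeries.constantCoeff (psSubst p R f)
      = eval (fun v : Fin (s + 1) => Fin.cases p ξ v) f := by
  rw [psSubst, aeval_def, eval₂_comp_left (PowerSeries.constantCoeff (R := k)), eval]
  congr 1
  ext a
  induction a using Fin.cases with
  | zero => simp
  | succ m => simp [hc]

lemma psSubst_biToMv [Field k] {s : ℕ} (hs : 1 ≤ s) (p : k) (R : Fin s → PowerSeries k)
    (M : Polynomial (Polynomial k)) :
    psSubst p R (biToMv M) =
      (M.map (Polynomial.aeval (PowerSeries.C p + PowerSeries.X)).toRingHom).eval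
        (R ⟨0, hs⟩) := by
  have h1 : (1 : Fin (s + 1)) = Fin.succ ⟨0, hs⟩ := Fin.ext (by simp [Nat.mod_eq_of_lt (by omega : 1 < s + 1)])
  rw [Polynomial.eval_map, psSubst, biToMv, ← AlgHom.coe_toRingHom, Polynomial.hom_eval₂]
  congr 1
  · apply Polynomial.ringHom_ext
    · intro a; simp [algebraMap_eq]
    · simp
  · simp [h1]

theorem statement13_general [Field k] {s : ℕ} (hs : 1 ≤ s)
    (f : Fin s → MvPolynomial (Fin (s + 1)) k) (g : MvPolynomial (Fin (s + 1)) k)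
    (p : k)
    (hZfin : (zerFib f p).Finite)
    (hg : ∀ ξ ∈ zerFib f p, eval (fun v : Fin (s + 1) => Fin.cases p ξ v) g ≠ 0)
    (hsep : ∀ ξ ∈ zerFib f p, ∀ η ∈ zerFib f p, ξ ⟨0, hs⟩ = η ⟨0, hs⟩ → ξ = η)
    (M : Polynomial (Polynomial k)) (hM : M.Monic)
    (hMdeg : M.natDegree = hZfin.toFinset.card)
    (hMmem : algebraMap (MvPolynomial (Fin (s + 1)) k) (Localization.Away g)
        (biToMv M) ∈
      Ideal.span (Set.range fun i : Fin s =>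
        algebraMap (MvPolynomial (Fin (s + 1)) k) (Localization.Away g) (f i)))
    -- `R ξ` is the unique power-series solution of `f(p+t, R) = 0` with constant term `ξ`
    (R : (Fin s → k) → Fin s → PowerSeries k)
    (hR : ∀ ξ ∈ zerFib f p,
      (∀ i : Fin s, psSubst p (R ξ) (f i) = 0) ∧
      (∀ m : Fin s, PowerSeries.constantCoeff (R ξ m) = ξ m)) :
    Polynomial.map
        ((Polynomial.aeval (PowerSeries.C p + PowerSeries.X) :
          Polynomial k →ₐ[k] PowerSeries k).toRingHom) M =
      ∏ ξ ∈ hZfin.toFinset,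
        (Polynomial.X - Polynomial.C (R ξ ⟨0, hs⟩)) := by
  have hroot : ∀ ξ ∈ hZfin.toFinset, (M.map (Polynomial.aeval
      (PowerSeries.C p + PowerSeries.X)).toRingHom).IsRoot (R ξ ⟨0, hs⟩) := by
    intro ξ hξ
    rw [Set.Finite.mem_toFinset] at hξ
    obtain ⟨hRf, hRc⟩ := hR ξ hξ
    have hunit : IsUnit (psSubst p (R ξ) g) := by
      rw [PowerSeries.isUnit_iff_constantCoeff, constantCoeff_psSubst p _ ξ hRc]
      exact (hg ξ hξ).isUnit
    rw [Polynomial.IsRoot, ← psSubst_biToMv hs]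
    exact eq_zero_of_algebraMap_mem_span g _ (aeval _).toRingHom hunit f hRf hMmem
  have hinj : Set.InjOn (fun ξ => R ξ ⟨0, hs⟩) hZfin.toFinset := by
    intro ξ hξ η hη h
    rw [Finset.mem_coe, Set.Finite.mem_toFinset] at hξ hη
    refine hsep ξ hξ η hη ?_
    rw [← (hR ξ hξ).2, ← (hR η hη).2]
    exact congrArg PowerSeries.constantCoeff h
  exact (hM.map _).eq_prod_X_sub_C_of_injOn _ _ hinj hroot (by rw [hM.natDegree_map, hMdeg])

/-- With `Z` finite and nonempty, `g` and the Jacobian determinant nonzero at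
every point of `Z`, the first coordinates of the points of `Z` pairwise distinct, and
`M ∈ k[X₀][T]` monic of degree `#Z` in `T` with `M(X₀, X₁)` in the ideal generated by
`f₁,…,f_s` in `k[X₀,…,X_s]_g`, the polynomial `M(p+t, T)` factors as
`∏_{ξ ∈ Z} (T − R^ξ₁)` over `k⟦t⟧`, where `R^ξ` is the Newton–Hensel power series solution
with constant term `ξ`. -/
theorem statement13 [Field k] [IsAlgClosed k] {s : ℕ} (hs : 1 ≤ s)
    (f : Fin s → MvPolynomial (Fin (s + 1)) k) (g : MvPolynomial (Fin (s + 1)) k)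
    (p : k)
    (hZfin : (zerFib f p).Finite) (hZne : (zerFib f p).Nonempty)
    (hg : ∀ ξ ∈ zerFib f p, eval (fun v : Fin (s + 1) => Fin.cases p ξ v) g ≠ 0)
    (hjac : ∀ ξ ∈ zerFib f p, (Matrix.of fun i m : Fin s =>
      eval (fun v : Fin (s + 1) => Fin.cases p ξ v) (pderiv (Fin.succ m) (f i))).det ≠ 0)
    (hsep : ∀ ξ ∈ zerFib f p, ∀ η ∈ zerFib f p, ξ ⟨0, hs⟩ = η ⟨0, hs⟩ → ξ = η)
    (M : Polynomial (Polynomial k)) (hM : M.Monic)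
    (hMdeg : M.natDegree = hZfin.toFinset.card)
    (hMmem : algebraMap (MvPolynomial (Fin (s + 1)) k) (Localization.Away g)
        (biToMv M) ∈
      Ideal.span (Set.range fun i : Fin s =>
        algebraMap (MvPolynomial (Fin (s + 1)) k) (Localization.Away g) (f i)))
    -- `R ξ` is the unique power-series solution of `f(p+t, R) = 0` with constant term `ξ`
    (R : (Fin s → k) → Fin s → PowerSeries k)
    (hR : ∀ ξ ∈ zerFib f p,
      (∀ i : Fin s, psSubst p (R ξ) (f i) = 0) ∧
      (∀ m : Fin s, PowerSeries.constantCoeff (R ξ m) = ξ m)) :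
    Polynomial.map
        ((Polynomial.aeval (PowerSeries.C p + PowerSeries.X) :
          Polynomial k →ₐ[k] PowerSeries k).toRingHom) M =
      ∏ ξ ∈ hZfin.toFinset,
        (Polynomial.X - Polynomial.C (R ξ ⟨0, hs⟩)) :=
  statement13_general hs f g p hZfin hg hsep M hM hMdeg hMmem R hR
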